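/- For all natural numbers n and k with 0 ≤ k ≤ ⌊n/2⌋, the number of B-paths of length n having exactly k down-steps equals C(n,k) − C(n,k-1) (where C(n,-1) = 0). -/

import Mathlib

/-!
Count, more generally, the B-path prefixes of length `n` with `k` down-steps that end at height
`h ≥ 0`. Splitting off the last step gives a recurrence, and by induction on `n` this count is
`C(n,k) - C(n,k-1)` whenever `h + 2k ≤ n`, independently of `h`. For `h > 0` the last step is
`U` or `D` and the induction step is Pascal's rule; for `h = 0` the last step is `D` or `H`, and
the `H`-term takes over the role of the missing `U`-term. At the boundary `n = 2k - 1` that term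
is `0`, and so is `C(2k-1,k) - C(2k-1,k-1)`.
-/

/-- A step of a lattice path: up-step (1,1), down-step (1,-1), or horizontal step (1,0). -/
inductive Step where
  | U : Step
  | D : Step
  | H : Step
deriving DecidableEq

instance : Fintype Step where
  elems := {Step.U, Step.D, Step.H}
  complete := fun x => by cases x <;> simp

/-- The change in the second coordinate produced by a step. -/
def stepVal : Step → ℤ
  | .U => 1
  | .D => -1
  | .H => 0

/-- The height (second coordinate) reached after performing the steps of `l`, starting at 0. -/
def hgt (l : List Step) : ℤ := (l.map stepVal).sum

/-- `l` is a B-path: it returns to height 0, never goes below the x-axis, and all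
horizontal steps occur at height 0. -/
def IsBPath (l : List Step) : Prop :=
  hgt l = 0 ∧ (∀ i : ℕ, 0 ≤ hgt (l.take i)) ∧
    ∀ i : ℕ, l[i]? = some Step.H → hgt (l.take i) = 0

namespace List

variable {α : Type*}

theorem append_singleton_prefix_iff {l m : List α} {a : α} :
    m ++ [a] <+: l ↔ ∃ i, l[i]? = some a ∧ m = l.take i := by
  constructor
  · rintro ⟨t, rfl⟩
    exact ⟨m.length, by simp, by simp⟩
  · rintro ⟨i, hi, rfl⟩
    obtain ⟨hil, rfl⟩ := getElem?_eq_some_iff.mp hi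
    rw [take_concat_get']
    exact take_prefix _ _

theorem forall_take_iff_forall_prefix {l : List α} {P : List α → Prop} :
    (∀ i, P (l.take i)) ↔ ∀ m, m <+: l → P m :=
  ⟨fun h _ hm => prefix_iff_eq_take.mp hm ▸ h _, fun h i => h _ (take_prefix i l)⟩

theorem forall_getElem?_eq_some_iff_forall_prefix {l : List α} {a : α} {P : List α → Prop} :
    (∀ i, l[i]? = some a → P (l.take i)) ↔ ∀ m, m ++ [a] <+: l → P m := by
  simp only [append_singleton_prefix_iff]
  grind

theorem card_length_succ [Fintype α] (n : ℕ) (P : List α → Prop) :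
    Nat.card {l : List α // l.length = n + 1 ∧ P l} =
      ∑ a : α, Nat.card {l : List α // l.length = n ∧ P (l ++ [a])} := by
  have : ∀ a : α, Finite {l : List α // l.length = n ∧ P (l ++ [a])} := fun a =>
    ((finite_length_eq α n).subset fun _ hl => hl.1).to_subtype
  rw [← Nat.card_sigma]
  refine Nat.card_congr
    { toFun := fun l => ⟨l.1.getLast (ne_nil_of_length_eq_add_one l.2.1),
        l.1.dropLast, by simp [l.2.1], by simpa [dropLast_append_getLast] using l.2.2⟩
      invFun := fun l => ⟨l.2.1 ++ [l.1], by simp [l.2.2.1], l.2.2.2⟩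
      left_inv := fun l => Subtype.ext (dropLast_append_getLast _)
      right_inv := fun l => Sigma.subtype_ext (getLast_concat ..) (dropLast_concat ..) }

end List

theorem Step.sum_univ {M : Type*} [AddCommMonoid M] (f : Step → M) :
    ∑ s, f s = f .U + f .D + f .H := by
  show ∑ s ∈ {Step.U, Step.D, Step.H}, f s = _
  simp [add_assoc]

@[simp]
theorem hgt_nil : hgt [] = 0 := rfl

@[simp]
theorem hgt_append (l m : List Step) : hgt (l ++ m) = hgt l + hgt m := by
  simp [hgt]

@[simp]
theorem hgt_cons (s : Step) (l : List Step) : hgt (s :: l) = stepVal s + hgt l := by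
  simp [hgt]

theorem hgt_add_two_mul_count_le_length (l : List Step) :
    hgt l + 2 * l.count Step.D ≤ l.length := by
  induction l with
  | nil => simp
  | cons s l ih => cases s <;> simp [stepVal] <;> omega

def IsBPrefix (l : List Step) : Prop :=
  (∀ m, m <+: l → 0 ≤ hgt m) ∧ ∀ m, m ++ [Step.H] <+: l → hgt m = 0

theorem isBPath_iff {l : List Step} : IsBPath l ↔ IsBPrefix l ∧ hgt l = 0 := by
  simp only [IsBPath, IsBPrefix, ← List.forall_take_iff_forall_prefix,
    ← List.forall_getElem?_eq_some_iff_forall_prefix]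
  tauto

theorem IsBPrefix.hgt_nonneg {l : List Step} (hl : IsBPrefix l) : 0 ≤ hgt l :=
  hl.1 l (List.prefix_refl l)

theorem isBPrefix_append_singleton {l : List Step} {s : Step} :
    IsBPrefix (l ++ [s]) ↔
      IsBPrefix l ∧ 0 ≤ hgt l + stepVal s ∧ (s = Step.H → hgt l = 0) := by
  simp only [IsBPrefix, List.prefix_concat_iff, List.append_singleton_inj, or_imp, forall_and,
    forall_eq, hgt_append, hgt_cons, hgt_nil, add_zero, eq_comm (a := Step.H), and_imp]
  tauto

def IsBPrefixWith (k : ℕ) (h : ℤ) (l : List Step) : Prop :=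
  IsBPrefix l ∧ l.count Step.D = k ∧ hgt l = h

theorem isBPrefixWith_append_U {k : ℕ} {h : ℤ} {l : List Step} :
    IsBPrefixWith k h (l ++ [.U]) ↔ 0 ≤ h ∧ IsBPrefixWith k (h - 1) l := by
  simp only [IsBPrefixWith, isBPrefix_append_singleton, List.count_append, List.count_singleton,
    hgt_append, hgt_cons, hgt_nil, stepVal]
  grind

theorem isBPrefixWith_succ_append_D {k : ℕ} {h : ℤ} {l : List Step} :
    IsBPrefixWith (k + 1) h (l ++ [.D]) ↔ 0 ≤ h ∧ IsBPrefixWith k (h + 1) l := by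
  simp only [IsBPrefixWith, isBPrefix_append_singleton, List.count_append, List.count_singleton,
    hgt_append, hgt_cons, hgt_nil, stepVal]
  grind

theorem not_isBPrefixWith_zero_append_D {h : ℤ} {l : List Step} :
    ¬ IsBPrefixWith 0 h (l ++ [.D]) := by
  simp [IsBPrefixWith]

theorem isBPrefixWith_append_H {k : ℕ} {h : ℤ} {l : List Step} :
    IsBPrefixWith k h (l ++ [.H]) ↔ h = 0 ∧ IsBPrefixWith k 0 l := by
  simp only [IsBPrefixWith, isBPrefix_append_singleton, List.count_append, List.count_singleton,
    hgt_append, hgt_cons, hgt_nil, stepVal]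
  grind

noncomputable def bPrefixCount (n k : ℕ) (h : ℤ) : ℕ :=
  Nat.card {l : List Step // l.length = n ∧ IsBPrefixWith k h l}

theorem bPrefixCount_zero : bPrefixCount 0 0 0 = 1 := by
  rw [bPrefixCount, Nat.card_eq_one_iff_unique]
  refine ⟨⟨fun a b => Subtype.ext ?_⟩, ⟨⟨[], rfl, ⟨by simp, by simp⟩, rfl, rfl⟩⟩⟩
  rw [List.length_eq_zero_iff.mp a.2.1, List.length_eq_zero_iff.mp b.2.1]

theorem bPrefixCount_of_neg {n k : ℕ} {h : ℤ} (hh : h < 0) : bPrefixCount n k h = 0 := by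
  rw [bPrefixCount, Nat.card_eq_zero]
  refine Or.inl ⟨?_⟩
  rintro ⟨l, -, hl, -, hlh⟩
  have := hl.hgt_nonneg
  omega

theorem bPrefixCount_of_lt {n k : ℕ} {h : ℤ} (hn : n < h + 2 * k) : bPrefixCount n k h = 0 := by
  rw [bPrefixCount, Nat.card_eq_zero]
  refine Or.inl ⟨?_⟩
  rintro ⟨l, hln, -, hlk, hlh⟩
  have := hgt_add_two_mul_count_le_length l
  omega

theorem bPrefixCount_succ {n k : ℕ} {h : ℤ} (h0 : 0 ≤ h) :
    bPrefixCount (n + 1) k h = bPrefixCount n k (h - 1) +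
      (if k = 0 then 0 else bPrefixCount n (k - 1) (h + 1)) +
      (if h = 0 then bPrefixCount n k 0 else 0) := by
  have hU : Nat.card {l : List Step // l.length = n ∧ IsBPrefixWith k h (l ++ [.U])} =
      bPrefixCount n k (h - 1) :=
    Nat.card_congr <| Equiv.subtypeEquivRight fun l => by simp [isBPrefixWith_append_U, h0]
  have hD : Nat.card {l : List Step // l.length = n ∧ IsBPrefixWith k h (l ++ [.D])} =
      if k = 0 then 0 else bPrefixCount n (k - 1) (h + 1) := by
    cases k with
    | zero => simp [not_isBPrefixWith_zero_append_D]
    | succ k =>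
      exact Nat.card_congr <| Equiv.subtypeEquivRight fun l => by
        simp [isBPrefixWith_succ_append_D, h0]
  have hH : Nat.card {l : List Step // l.length = n ∧ IsBPrefixWith k h (l ++ [.H])} =
      if h = 0 then bPrefixCount n k 0 else 0 := by
    split_ifs with hh
    · exact Nat.card_congr <| Equiv.subtypeEquivRight fun l => by simp [isBPrefixWith_append_H, hh]
    · simp [isBPrefixWith_append_H, hh]
  rw [bPrefixCount, List.card_length_succ, Step.sum_univ, hU, hD, hH]

def ballot (n : ℕ) : ℕ → ℤ
  | 0 => 1
  | k + 1 => n.choose (k + 1) - n.choose k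

theorem ballot_succ_succ (n k : ℕ) : ballot (n + 1) (k + 1) = ballot n (k + 1) + ballot n k := by
  cases k <;> simp only [ballot, Nat.choose_succ_succ, Nat.choose_zero_right, Nat.cast_add] <;> ring

theorem ballot_two_mul_add_one_succ (k : ℕ) : ballot (2 * k + 1) (k + 1) = 0 := by
  simp [ballot, Nat.choose_symm_half]

theorem bPrefixCount_eq_ballot {n k : ℕ} {h : ℤ} (h0 : 0 ≤ h) (hle : h + 2 * k ≤ n) :
    (bPrefixCount n k h : ℤ) = ballot n k := by
  induction n generalizing k h with
  | zero =>
    obtain rfl : k = 0 := by omega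
    obtain rfl : h = 0 := by omega
    simp [bPrefixCount_zero, ballot]
  | succ n ih =>
    rw [bPrefixCount_succ h0]
    rcases k with _ | k <;> rcases h0.eq_or_lt with rfl | hpos
    · simp [bPrefixCount_of_neg, ih (k := 0) le_rfl (by omega), ballot]
    · simp [hpos.ne', ih (k := 0) (h := h - 1) (by omega) (by omega), ballot]
    · have hD : (bPrefixCount n (k + 1) 0 : ℤ) = ballot n (k + 1) := by
        rcases Nat.lt_or_ge n (2 * (k + 1)) with hn | hn
        · obtain rfl : n = 2 * k + 1 := by omega
          rw [bPrefixCount_of_lt (by push_cast; omega), ballot_two_mul_add_one_succ, Nat.cast_zero]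
        · exact ih le_rfl (by omega)
      simp [bPrefixCount_of_neg, ih (k := k) zero_le_one (by omega), hD, ballot_succ_succ, add_comm]
    · simp [hpos.ne', ih (k := k + 1) (h := h - 1) (by omega) (by omega),
        ih (k := k) (h := h + 1) (by omega) (by omega),
        ballot_succ_succ]

/-- For `0 ≤ k ≤ ⌊n/2⌋`, the number of B-paths of length `n` with exactly `k` down-steps
is `C(n,k) - C(n,k-1)`, where `C(n,-1) = 0`. -/
theorem stmt1 (n k : ℕ) (hk : k ≤ n / 2) :
    (Nat.card {l : List Step //
        l.length = n ∧ IsBPath l ∧ l.count Step.D = k} : ℤ)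
      = (n.choose k : ℤ) - (if k = 0 then 0 else (n.choose (k - 1) : ℤ)) := by
  have hcard : Nat.card {l : List Step // l.length = n ∧ IsBPath l ∧ l.count Step.D = k} =
      bPrefixCount n k 0 :=
    Nat.card_congr <| Equiv.subtypeEquivRight fun l => by
      rw [isBPath_iff, IsBPrefixWith]
      tauto
  rw [hcard, bPrefixCount_eq_ballot le_rfl (by omega)]
  cases k <;> simp [ballot]
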